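/- Let 𝒮 = (S_1,…,S_n) be a list of finite nonempty subsets of a finite universe U = ⋃_i S_i, and let G and c be the genome and CNP constructed from 𝒮 as described. If 𝒮 admits an exact cover 𝒮* ⊆ {S_1,…,S_n} of cardinality k (i.e. the sets of 𝒮* are pairwise disjoint and their union is U), then there exists a sequence E of exactly k deletion events such that cnp(G⟨E⟩) = c; in particular the minimum number of events needed is at most k. -/

import Mathlib

/-- An event is either a deletion `del i j` (removing the substring from position `i`
to position `j`, 1-based) or a duplication `dup i j p` (copying the substring from
position `i` to position `j` and inserting the copy after position `p`). -/
inductive GEvent where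
  | del (i j : ℕ)
  | dup (i j p : ℕ)
deriving DecidableEq

/-- Applying an event to a genome (a list of characters). -/
def applyEvent {α : Type*} (G : List α) : GEvent → List α
  | .del i j => G.take (i - 1) ++ G.drop j
  | .dup i j p => G.take p ++ ((G.drop (i - 1)).take (j - i + 1)) ++ G.drop p

/-- Validity of an event on a genome: `del i j` requires `1 ≤ i ≤ j ≤ |G|`;
`dup i j p` requires `1 ≤ i ≤ j ≤ |G|` and `p ∈ {0,…,i−1} ∪ {j,…,|G|}`. -/
def GEvent.Valid {α : Type*} (G : List α) : GEvent → Prop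
  | .del i j => 1 ≤ i ∧ i ≤ j ∧ j ≤ G.length
  | .dup i j p => 1 ≤ i ∧ i ≤ j ∧ j ≤ G.length ∧ (p ≤ i - 1 ∨ (j ≤ p ∧ p ≤ G.length))

/-- `applyEvents G E` is `G⟨E⟩`, the genome obtained by successively applying
the events of `E` to `G`. -/
def applyEvents {α : Type*} (G : List α) : List GEvent → List α
  | [] => G
  | e :: E => applyEvents (applyEvent G e) E

/-- A sequence of events is valid on `G` if each event is valid on the genome
obtained by applying the previous events. -/
def ValidSeq {α : Type*} (G : List α) : List GEvent → Prop
  | [] => True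
  | e :: E => e.Valid G ∧ ValidSeq (applyEvent G e) E

/-- The copy-number profile of a genome: the number of occurrences of each character. -/
def cnp {α : Type*} [DecidableEq α] (G : List α) : α → ℕ := fun s => G.count s

/-- The Genome-to-CNP distance: the minimum length of a valid event sequence turning `G`
into a genome with CNP `c` (`⊤` if there is none). -/
noncomputable def dGCNP {α : Type*} [DecidableEq α] (G : List α) (c : α → ℕ) : ℕ∞ :=
  sInf { k : ℕ∞ | ∃ E : List GEvent,
    ValidSeq G E ∧ (E.length : ℕ∞) = k ∧ cnp (applyEvents G E) = c }

/-- The genome constructed from a SET-COVER instance: the alphabet is `Fin n ⊕ V`, where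
`Sum.inl i` is the separator character `σᵢ` and `Sum.inr u` is the character `γᵤ`;
`q i` lists the elements of `S i` (each exactly once), and
`G = σ₁ q(S₁) σ₂ q(S₂) ⋯ σₙ q(Sₙ)`. -/
def scGenome {V : Type*} (n : ℕ) (q : Fin n → List V) : List (Fin n ⊕ V) :=
  (List.finRange n).flatMap (fun i => Sum.inl i :: (q i).map Sum.inr)

/-- The CNP constructed from a SET-COVER instance: `c(σᵢ) = 1` and `c(γᵤ) = f(u) − 1`,
where `f(u)` is the number of sets of the instance containing `u`. -/
def scCNP {V : Type*} [Fintype V] [DecidableEq V] (n : ℕ) (S : Fin n → Finset V) :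
    (Fin n ⊕ V) → ℕ
  | Sum.inl _ => 1
  | Sum.inr u => (Finset.univ.filter fun i => u ∈ S i).card - 1

/-! Deleting the block `q(Sᵢ)` of every `i ∈ I` takes one deletion per chosen set. What is left
contains each separator once, and `γᵤ` once for every set containing `u` except the unique chosen
one, which is exactly the CNP `c`. -/

section Cnp

variable {α β : Type*} [DecidableEq α]

lemma cnp_flatMap (l : List β) (f : β → List α) (a : α) :
    cnp (l.flatMap f) a = (l.map fun b => cnp (f b) a).sum :=
  List.count_flatMap

lemma cnp_cons (b : α) (l : List α) (a : α) :
    cnp (b :: l) a = cnp l a + if b = a then 1 else 0 := by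
  simp [cnp, List.count_cons]

lemma cnp_map_of_injective [DecidableEq β] {f : β → α} (hf : Function.Injective f) (l : List β)
    (b : β) : cnp (l.map f) (f b) = cnp l b :=
  List.count_map_of_injective l f hf b

lemma cnp_eq_zero {l : List α} {a : α} (h : a ∉ l) : cnp l a = 0 :=
  List.count_eq_zero_of_not_mem h

lemma cnp_of_nodup {l : List α} (hl : l.Nodup) (a : α) : cnp l a = if a ∈ l then 1 else 0 := by
  split_ifs with ha
  · exact List.count_eq_one_of_mem hl ha
  · exact cnp_eq_zero ha

end Cnp

section Events

variable {α : Type*}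

lemma applyEvents_append (G : List α) (E F : List GEvent) :
    applyEvents G (E ++ F) = applyEvents (applyEvents G E) F := by
  induction E generalizing G with
  | nil => rfl
  | cons e E ih => exact ih _

lemma validSeq_append {G : List α} {E F : List GEvent} :
    ValidSeq G (E ++ F) ↔ ValidSeq G E ∧ ValidSeq (applyEvents G E) F := by
  induction E generalizing G with
  | nil => simp [ValidSeq, applyEvents]
  | cons e E ih => simp [ValidSeq, applyEvents, ih, and_assoc]

lemma valid_del_middle (A B C : List α) (hB : B ≠ []) :
    (GEvent.del (A.length + 1) (A.length + B.length)).Valid (A ++ B ++ C) := by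
  have := List.length_pos_iff.mpr hB
  simp only [GEvent.Valid, List.length_append]
  omega

lemma applyEvent_del_middle (A B C : List α) :
    applyEvent (A ++ B ++ C) (.del (A.length + 1) (A.length + B.length)) = A ++ C := by
  simp [applyEvent, List.drop_append]

end Events

section Deletions

variable {V : Type*} {n : ℕ}

def scGenomeDel (n : ℕ) (q : Fin n → List V) (J : Finset (Fin n)) : List (Fin n ⊕ V) :=
  (List.finRange n).flatMap fun i => Sum.inl i :: (if i ∈ J then [] else q i).map Sum.inr

lemma scGenomeDel_empty (q : Fin n → List V) : scGenomeDel n q ∅ = scGenome n q := by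
  simp [scGenomeDel, scGenome]

lemma scGenomeDel_insert_eq (q : Fin n → List V) {J : Finset (Fin n)} {i : Fin n} (hi : i ∉ J) :
    ∃ A C, scGenomeDel n q J = A ++ (q i).map Sum.inr ++ C ∧
      scGenomeDel n q (insert i J) = A ++ C := by
  obtain ⟨s, t, hst⟩ := List.append_of_mem (List.mem_finRange i)
  have hi_st : i ∉ s ++ t :=
    (List.nodup_cons.mp (List.nodup_middle.mp (hst ▸ List.nodup_finRange n))).1
  set block := fun (K : Finset (Fin n)) (j : Fin n) =>
    (Sum.inl j :: (if j ∈ K then [] else q j).map Sum.inr : List (Fin n ⊕ V))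
  have hoff : ∀ l : List (Fin n), i ∉ l → l.flatMap (block (insert i J)) = l.flatMap (block J) :=
    fun l hl => List.flatMap_congr fun j hj => by
      simp [block, Finset.mem_insert, show j ≠ i by rintro rfl; exact hl hj]
  refine ⟨s.flatMap (block J) ++ [Sum.inl i], t.flatMap (block J), ?_, ?_⟩
  · simp [scGenomeDel, hst, block, hi]
  · change (List.finRange n).flatMap (block (insert i J)) = _
    rw [hst, List.flatMap_append, List.flatMap_cons,
      hoff s fun h => hi_st (List.mem_append_left t h),
      hoff t fun h => hi_st (List.mem_append_right s h)]
    simp [block]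

theorem exists_deletions_scGenomeDel (q : Fin n → List V) (J : Finset (Fin n))
    (hq : ∀ i ∈ J, q i ≠ []) :
    ∃ E : List GEvent, (∀ e ∈ E, ∃ i j, e = GEvent.del i j) ∧ E.length = J.card ∧
      ValidSeq (scGenome n q) E ∧ applyEvents (scGenome n q) E = scGenomeDel n q J := by
  induction J using Finset.induction_on with
  | empty => exact ⟨[], by simp, rfl, trivial, (scGenomeDel_empty q).symm⟩
  | insert i J hi ih =>
    obtain ⟨E, hdel, hlen, hvalid, happ⟩ := ih fun j hj => hq j (Finset.mem_insert_of_mem hj)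
    obtain ⟨A, C, hJ, hiJ⟩ := scGenomeDel_insert_eq q hi
    set B := (q i).map (Sum.inr : V → Fin n ⊕ V)
    refine ⟨E ++ [.del (A.length + 1) (A.length + B.length)], ?_, ?_, ?_, ?_⟩
    · intro e he
      rcases List.mem_append.mp he with he | he
      · exact hdel e he
      · exact ⟨_, _, List.mem_singleton.mp he⟩
    · simp [hlen, Finset.card_insert_of_notMem hi]
    · have hB : B ≠ [] := by simpa [B] using hq i (Finset.mem_insert_self i J)
      rw [validSeq_append, happ, hJ]
      exact ⟨hvalid, valid_del_middle A B C hB, trivial⟩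
    · rw [applyEvents_append, happ, hJ, hiJ]
      exact applyEvent_del_middle A B C

end Deletions

section Counting

variable {V : Type*} [DecidableEq V] {n : ℕ}

lemma cnp_scGenomeDel (q : Fin n → List V) (J : Finset (Fin n)) (x : Fin n ⊕ V) :
    cnp (scGenomeDel n q J) x =
      ∑ j, (cnp ((if j ∈ J then [] else q j).map Sum.inr) x + if Sum.inl j = x then 1 else 0) := by
  simp only [scGenomeDel, cnp_flatMap, cnp_cons, Fin.sum_univ_def]

lemma cnp_scGenomeDel_inl (q : Fin n → List V) (J : Finset (Fin n)) (i : Fin n) :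
    cnp (scGenomeDel n q J) (Sum.inl i) = 1 := by
  rw [cnp_scGenomeDel]
  simp [cnp_eq_zero]

lemma cnp_scGenomeDel_inr (S : Fin n → Finset V) (q : Fin n → List V) (hq : ∀ i, (q i).Nodup)
    (hqmem : ∀ i u, u ∈ q i ↔ u ∈ S i) (J : Finset (Fin n)) (u : V) :
    cnp (scGenomeDel n q J) (Sum.inr u) = (Finset.univ.filter fun j => j ∉ J ∧ u ∈ S j).card := by
  rw [cnp_scGenomeDel, Finset.card_filter]
  refine Finset.sum_congr rfl fun j _ => ?_
  rw [cnp_map_of_injective Sum.inr_injective]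
  split_ifs <;> simp_all [cnp_of_nodup]

lemma card_filter_mem_eq_card_filter_notMem_add_one {ι : Type*} [Fintype ι] [DecidableEq ι]
    (S : ι → Finset V) {I : Finset ι} (hdisj : ∀ i ∈ I, ∀ j ∈ I, i ≠ j → Disjoint (S i) (S j))
    {u : V} {i : ι} (hi : i ∈ I) (hu : u ∈ S i) :
    (Finset.univ.filter fun j => u ∈ S j).card =
      (Finset.univ.filter fun j => j ∉ I ∧ u ∈ S j).card + 1 := by
  have hsplit : (Finset.univ.filter fun j => u ∈ S j) =
      insert i (Finset.univ.filter fun j => j ∉ I ∧ u ∈ S j) := by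
    ext j
    simp only [Finset.mem_filter, Finset.mem_univ, true_and, Finset.mem_insert]
    refine ⟨fun huj => ?_, by rintro (rfl | ⟨-, huj⟩) <;> assumption⟩
    by_cases hji : j = i
    · exact Or.inl hji
    · exact Or.inr ⟨fun hj => Finset.disjoint_left.mp (hdisj j hj i hi hji) huj hu, huj⟩
  rw [hsplit, Finset.card_insert_of_notMem (by simp [hi])]

lemma cnp_scGenomeDel_of_exactCover [Fintype V] (S : Fin n → Finset V) (q : Fin n → List V)
    (hq : ∀ i, (q i).Nodup) (hqmem : ∀ i u, u ∈ q i ↔ u ∈ S i) (I : Finset (Fin n))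
    (hcover : ∀ u : V, ∃ i ∈ I, u ∈ S i)
    (hdisj : ∀ i ∈ I, ∀ j ∈ I, i ≠ j → Disjoint (S i) (S j)) :
    cnp (scGenomeDel n q I) = scCNP n S := by
  funext x
  rcases x with i | u
  · exact cnp_scGenomeDel_inl q I i
  · obtain ⟨i, hi, hu⟩ := hcover u
    rw [cnp_scGenomeDel_inr S q hq hqmem, scCNP,
      card_filter_mem_eq_card_filter_notMem_add_one S hdisj hi hu, Nat.add_sub_cancel]

end Counting

theorem exact_cover_to_deletions_general
    {V : Type*} [Fintype V] [DecidableEq V] (n : ℕ) (S : Fin n → Finset V)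
    (hne : ∀ i, (S i).Nonempty)
    (q : Fin n → List V)
    (hq : ∀ i, (q i).Nodup)
    (hqmem : ∀ i u, u ∈ q i ↔ u ∈ S i)
    (k : ℕ) (I : Finset (Fin n))
    (hIcard : I.card = k)
    (hcover : ∀ u : V, ∃ i ∈ I, u ∈ S i)
    (hdisj : ∀ i ∈ I, ∀ j ∈ I, i ≠ j → Disjoint (S i) (S j)) :
    (∃ E : List GEvent,
      (∀ e ∈ E, ∃ i j, e = GEvent.del i j) ∧
      E.length = k ∧
      ValidSeq (scGenome n q) E ∧
      cnp (applyEvents (scGenome n q) E) = scCNP n S) ∧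
    dGCNP (scGenome n q) (scCNP n S) ≤ (k : ℕ∞) := by
  obtain ⟨E, hdel, hlen, hvalid, happ⟩ := exists_deletions_scGenomeDel q I fun i _ h => by
    obtain ⟨u, hu⟩ := hne i
    simpa [h] using (hqmem i u).mpr hu
  have hcnp : cnp (applyEvents (scGenome n q) E) = scCNP n S := by
    rw [happ]
    exact cnp_scGenomeDel_of_exactCover S q hq hqmem I hcover hdisj
  rw [hIcard] at hlen
  exact ⟨⟨E, hdel, hlen, hvalid, hcnp⟩, sInf_le ⟨E, hvalid, by rw [hlen], hcnp⟩⟩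

/-- Lemma 2 of the paper: if the SET-COVER instance `S₁, …, Sₙ`
(nonempty finite sets covering the finite universe `V`) admits an exact cover
(given by an index set `I`: the chosen sets are pairwise disjoint and cover `V`)
of cardinality `k`, then there is a sequence of exactly `k` deletion events
transforming the constructed genome into a genome whose CNP is the constructed CNP;
in particular `d_GCNP ≤ k`. -/
theorem exact_cover_to_deletions
    {V : Type*} [Fintype V] [DecidableEq V] (n : ℕ) (S : Fin n → Finset V)
    (hne : ∀ i, (S i).Nonempty)
    (hU : ∀ u : V, ∃ i, u ∈ S i)
    (q : Fin n → List V)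
    (hq : ∀ i, (q i).Nodup)
    (hqmem : ∀ i u, u ∈ q i ↔ u ∈ S i)
    (k : ℕ) (I : Finset (Fin n))
    (hIcard : I.card = k)
    (hcover : ∀ u : V, ∃ i ∈ I, u ∈ S i)
    (hdisj : ∀ i ∈ I, ∀ j ∈ I, i ≠ j → Disjoint (S i) (S j)) :
    (∃ E : List GEvent,
      (∀ e ∈ E, ∃ i j, e = GEvent.del i j) ∧
      E.length = k ∧
      ValidSeq (scGenome n q) E ∧
      cnp (applyEvents (scGenome n q) E) = scCNP n S) ∧
    dGCNP (scGenome n q) (scCNP n S) ≤ (k : ℕ∞) :=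
  exact_cover_to_deletions_general n S hne q hq hqmem k I hIcard hcover hdisj
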